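/- arXiv:2006.11645 — 3 statements merged into one kernel-verified Lean document; each statement's English description precedes it below -/
import Mathlib

section
/- Let F be a positive definite symmetric n×n matrix, η > 0, G, H, σ ≥ 0, and f : ℝⁿ → ℝ differentiable with ‖∇f(θᵏ)‖ ≤ G. Suppose C is a closed convex set with diameter at most H, θᵏ ∈ C, σ₁(F) ≤ σ (largest singular value), and θ⁺ is the F-norm projection of θᵏ − η F⁻¹∇f(θᵏ) onto C. Then for all θ ∈ C: ∇f(θᵏ)ᵀ(θ − θᵏ) ≥ −(G + Hσ/η)‖θ⁺ − θᵏ‖. -/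
/-!
The projection `θ⁺` minimises the `F`-norm distance to `z = θᵏ - η F⁻¹ ∇f(θᵏ)` over the convex
set `C`, so comparing with the points of the segment from `θ⁺` towards `θ ∈ C` gives the
variational inequality `⟪z - θ⁺, F (θ - θ⁺)⟫ ≤ 0`. Since `F (F⁻¹ ∇f) = ∇f`, this reads
`η ⟪∇f, θ - θ⁺⟫ ≥ ⟪θᵏ - θ⁺, F (θ - θ⁺)⟫ ≥ -σ H ‖θ⁺ - θᵏ‖`, and Cauchy–Schwarz bounds the remaining
term `⟪∇f, θ⁺ - θᵏ⟫` by `-G ‖θ⁺ - θᵏ‖`.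
-/

open scoped RealInnerProductSpace
open Filter Topology

lemma nonpos_of_forall_le_mul {a c : ℝ} (h : ∀ t ∈ Set.Ioc (0 : ℝ) 1, a ≤ t * c) : a ≤ 0 := by
  have hlim : Tendsto (fun t : ℝ => t * c) (𝓝[>] 0) (𝓝 0) :=
    ((continuous_mul_const c).tendsto' 0 0 (zero_mul c)).mono_left nhdsWithin_le_nhds
  exact ge_of_tendsto hlim (Filter.mem_of_superset (Ioc_mem_nhdsGT one_pos) h)

variable {E : Type*} [NormedAddCommGroup E] [InnerProductSpace ℝ E]

namespace LinearMap.IsSymmetric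

variable {T : E →ₗ[ℝ] E}

lemma inner_sub_smul_map_sub_smul (hT : T.IsSymmetric) (u w : E) (t : ℝ) :
    ⟪u - t • w, T (u - t • w)⟫ = ⟪u, T u⟫ - 2 * t * ⟪u, T w⟫ + t ^ 2 * ⟪w, T w⟫ := by
  have hwu : ⟪w, T u⟫ = ⟪u, T w⟫ := by rw [← hT, real_inner_comm]
  simp only [map_sub, map_smul, inner_sub_left, inner_sub_right, real_inner_smul_left,
    real_inner_smul_right, hwu]
  ring

lemma inner_map_sub_nonpos_of_isMinOn (hT : T.IsSymmetric) {C : Set E} (hC : Convex ℝ C)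
    {z p y : E} (hp : p ∈ C) (hy : y ∈ C) (hmin : IsMinOn (fun x => ⟪z - x, T (z - x)⟫) C p) :
    ⟪z - p, T (y - p)⟫ ≤ 0 := by
  refine nonpos_of_forall_le_mul (c := ⟪y - p, T (y - p)⟫ / 2) fun t ht => ?_
  have hle := isMinOn_iff.mp hmin _ (hC.add_smul_sub_mem hp hy (Set.Ioc_subset_Icc_self ht))
  rw [show z - (p + t • (y - p)) = (z - p) - t • (y - p) by abel,
    hT.inner_sub_smul_map_sub_smul] at hle
  nlinarith [ht.1]

end LinearMap.IsSymmetric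

/-- `p` is the `T`-norm projection onto `C` of the preconditioned gradient step `x - η T⁻¹ g`. -/
theorem neg_mul_norm_le_inner_of_isMinOn {T : E →L[ℝ] E} (hT : (T : E →ₗ[ℝ] E).IsSymmetric)
    {g v x p y : E} (hv : T v = g) {η G H σ : ℝ} (hη : 0 < η) (hσ : 0 ≤ σ) (hg : ‖g‖ ≤ G)
    (hTσ : ‖T‖ ≤ σ) {C : Set E} (hC : Convex ℝ C) (hdiam : ∀ x ∈ C, ∀ y ∈ C, ‖x - y‖ ≤ H)
    (hp : p ∈ C) (hy : y ∈ C)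
    (hmin : IsMinOn (fun w => ⟪(x - η • v) - w, T ((x - η • v) - w)⟫) C p) :
    -(G + H * σ / η) * ‖p - x‖ ≤ ⟪g, y - x⟫ := by
  have hvi : ⟪(x - η • v) - p, T (y - p)⟫ ≤ 0 := hT.inner_map_sub_nonpos_of_isMinOn hC hp hy hmin
  have hvi_split : ⟪(x - η • v) - p, T (y - p)⟫ = ⟪x - p, T (y - p)⟫ - η * ⟪g, y - p⟫ := by
    rw [sub_right_comm, inner_sub_left, real_inner_smul_left, ← hv]
    exact congrArg (_ - η * ·) (hT v (y - p)).symm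
  have hTyp : ‖T (y - p)‖ ≤ σ * H :=
    (T.le_of_opNorm_le hTσ _).trans (mul_le_mul_of_nonneg_left (hdiam y hy p hp) hσ)
  have hprox : |⟪x - p, T (y - p)⟫| ≤ σ * H * ‖p - x‖ := by
    rw [mul_comm, ← norm_sub_rev]
    exact (abs_real_inner_le_norm _ _).trans (mul_le_mul_of_nonneg_left hTyp (norm_nonneg _))
  have hgrad : |⟪g, p - x⟫| ≤ G * ‖p - x‖ :=
    (abs_real_inner_le_norm _ _).trans (mul_le_mul_of_nonneg_right hg (norm_nonneg _))
  have hstep : -(σ * H * ‖p - x‖) / η ≤ ⟪g, y - p⟫ := by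
    rw [div_le_iff₀ hη]
    linarith [neg_abs_le ⟪x - p, T (y - p)⟫]
  calc -(G + H * σ / η) * ‖p - x‖ = -(G * ‖p - x‖) + -(σ * H * ‖p - x‖) / η := by
        field_simp
        ring
    _ ≤ ⟪g, p - x⟫ + ⟪g, y - p⟫ := add_le_add (by linarith [neg_abs_le ⟪g, p - x⟫]) hstep
    _ = ⟪g, y - x⟫ := by rw [← inner_add_right, add_comm, sub_add_sub_cancel]

theorem stmt_8_general {n : ℕ} (F : Matrix (Fin n) (Fin n) ℝ) (hF : F.PosDef)
    (η G H σ : ℝ) (hη : 0 < η) (hσ : 0 ≤ σ)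
    (gf : EuclideanSpace ℝ (Fin n))
    (θk : EuclideanSpace ℝ (Fin n)) (hgf : ‖gf‖ ≤ G)
    (C : Set (EuclideanSpace ℝ (Fin n))) (hconv : Convex ℝ C)
    (hdiam : ∀ x ∈ C, ∀ y ∈ C, ‖x - y‖ ≤ H)
    (hσ1 : ‖Matrix.toEuclideanCLM (𝕜 := ℝ) F‖ ≤ σ)
    (θplus : EuclideanSpace ℝ (Fin n)) (hmem : θplus ∈ C)
    (hmin : ∀ θ' ∈ C,
      ⟪(θk - η • (Matrix.toEuclideanLin F⁻¹ gf)) - θplus,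
        Matrix.toEuclideanLin F ((θk - η • (Matrix.toEuclideanLin F⁻¹ gf)) - θplus)⟫
        ≤ ⟪(θk - η • (Matrix.toEuclideanLin F⁻¹ gf)) - θ',
            Matrix.toEuclideanLin F ((θk - η • (Matrix.toEuclideanLin F⁻¹ gf)) - θ')⟫) :
    ∀ θ ∈ C, ⟪gf, θ - θk⟫ ≥ -(G + H * σ / η) * ‖θplus - θk‖ := by
  intro θ hθ
  have hsymm : (Matrix.toEuclideanLin F).IsSymmetric :=
    Matrix.isSymmetric_toEuclideanLin_iff.mpr hF.isHermitian
  have hinv : Matrix.toEuclideanCLM (𝕜 := ℝ) F (Matrix.toEuclideanLin F⁻¹ gf) = gf := by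
    change (Matrix.toEuclideanCLM (𝕜 := ℝ) F * Matrix.toEuclideanCLM (𝕜 := ℝ) F⁻¹) gf = gf
    rw [← map_mul, Matrix.mul_nonsing_inv _ hF.det_pos.ne'.isUnit, map_one]
    rfl
  exact neg_mul_norm_le_inner_of_isMinOn hsymm hinv hη hσ hgf hσ1 hconv hdiam hmem hθ
    (isMinOn_iff.mpr hmin)

theorem stmt_8 {n : ℕ} (F : Matrix (Fin n) (Fin n) ℝ) (hF : F.PosDef)
    (η G H σ : ℝ) (hη : 0 < η) (hG : 0 ≤ G) (hH : 0 ≤ H) (hσ : 0 ≤ σ)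
    (f : EuclideanSpace ℝ (Fin n) → ℝ) (gf : EuclideanSpace ℝ (Fin n))
    (θk : EuclideanSpace ℝ (Fin n)) (hgrad : HasGradientAt f gf θk) (hgf : ‖gf‖ ≤ G)
    (C : Set (EuclideanSpace ℝ (Fin n))) (hcl : IsClosed C) (hconv : Convex ℝ C)
    (hdiam : ∀ x ∈ C, ∀ y ∈ C, ‖x - y‖ ≤ H) (hθk : θk ∈ C)
    (hσ1 : ‖Matrix.toEuclideanCLM (𝕜 := ℝ) F‖ ≤ σ)
    (θplus : EuclideanSpace ℝ (Fin n)) (hmem : θplus ∈ C)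
    (hmin : ∀ θ' ∈ C,
      ⟪(θk - η • (Matrix.toEuclideanLin F⁻¹ gf)) - θplus,
        Matrix.toEuclideanLin F ((θk - η • (Matrix.toEuclideanLin F⁻¹ gf)) - θplus)⟫
        ≤ ⟪(θk - η • (Matrix.toEuclideanLin F⁻¹ gf)) - θ',
            Matrix.toEuclideanLin F ((θk - η • (Matrix.toEuclideanLin F⁻¹ gf)) - θ')⟫) :
    ∀ θ ∈ C, ⟪gf, θ - θk⟫ ≥ -(G + H * σ / η) * ‖θplus - θk‖ :=
  stmt_8_general F hF η G H σ hη hσ gf θk hgf C hconv hdiam hσ1 θplus hmem hmin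
end

section
/- Let F be a positive definite symmetric n×n matrix, g, a, c ∈ ℝⁿ with g ≠ 0, b, d ∈ ℝ, δ > 0, and let u = √(2δ/(gᵀF⁻¹g)). Define θ^{1/3} = θᵏ + u F⁻¹ g. If the minimizer of (1/2)(θ − θ^{1/3})ᵀF(θ − θ^{1/3}) over {θ : aᵀ(θ − θᵏ) + b ≤ 0} is θ^{2/3}, and the minimizer of (1/2)(θ − θ^{1/3})ᵀF(θ − θ^{1/3}) over {θ : cᵀ(θ − θᵏ) + d ≤ 0} is θ', then combining the two displacement corrections gives θᵏ⁺¹ = θᵏ + u F⁻¹g − max(0, (u aᵀF⁻¹g + b)/(aᵀF⁻¹a)) F⁻¹a − max(0, (u cᵀF⁻¹g + d)/(cᵀF⁻¹c)) F⁻¹c, i.e., θᵏ⁺¹ = θ^{2/3} + (θ' − θ^{1/3}). -/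
/-!
Each of θ^{2/3} and θ' is the F-projection of θ^{1/3} onto a halfspace `{θ | a ⬝ᵥ (θ - θᵏ) + b ≤ 0}`,
and that projection has the closed form `p - t • F⁻¹ a` with `t = max 0 ((a ⬝ᵥ (p - θᵏ) + b) / aᵀF⁻¹a)`.
The candidate is feasible, and since `F (q - p) = -t a` with `t` vanishing unless the constraint is
active, it satisfies the variational inequality `0 ≤ (y - q)ᵀF(q - p)` on the halfspace. Expanding
`(x - p)ᵀF(x - p)` around `q` then shows that any minimiser `x` has `(x - q)ᵀF(x - q) ≤ 0`, so `x = q`.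
Substituting `θ^{1/3} - θᵏ = u F⁻¹ g` into both closed forms gives the update.
-/

open scoped Matrix
open Matrix

lemma max_zero_div_mul_sub_mul_eq_zero (r s : ℝ) : max 0 (r / s) * (r - max 0 (r / s) * s) = 0 := by
  rcases le_or_gt (r / s) 0 with h | h
  · simp [max_eq_left h]
  · have hs : s ≠ 0 := by rintro rfl; simp at h
    rw [max_eq_right h.le, div_mul_cancel₀ r hs, sub_self, mul_zero]

lemma sub_max_zero_div_mul_nonpos (r : ℝ) {s : ℝ} (hs : 0 < s) : r - max 0 (r / s) * s ≤ 0 := by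
  have : r / s * s ≤ max 0 (r / s) * s := mul_le_mul_of_nonneg_right (le_max_right _ _) hs.le
  rw [div_mul_cancel₀ r hs.ne'] at this
  linarith

variable {ι : Type*} [Fintype ι] {F : Matrix ι ι ℝ}

lemma Matrix.IsHermitian.dotProduct_mulVec_comm (hF : F.IsHermitian) (v w : ι → ℝ) :
    v ⬝ᵥ F *ᵥ w = w ⬝ᵥ F *ᵥ v := by
  have hT : Fᵀ = F := by simpa [IsHermitian] using hF
  rw [dotProduct_mulVec, ← mulVec_transpose, hT, dotProduct_comm]

namespace Matrix.PosDef

lemma eq_zero_of_dotProduct_mulVec_self_nonpos (hF : F.PosDef) {v : ι → ℝ}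
    (h : v ⬝ᵥ F *ᵥ v ≤ 0) : v = 0 := by
  by_contra hv
  exact h.not_gt (by simpa using hF.dotProduct_mulVec_pos hv)

lemma eq_of_isMin_of_variational (hF : F.PosDef) {S : Set (ι → ℝ)} {p q x : ι → ℝ}
    (hq : q ∈ S) (hvar : ∀ y ∈ S, 0 ≤ (y - q) ⬝ᵥ F *ᵥ (q - p)) (hx : x ∈ S)
    (hmin : ∀ y ∈ S, (x - p) ⬝ᵥ F *ᵥ (x - p) ≤ (y - p) ⬝ᵥ F *ᵥ (y - p)) : x = q := by
  have hexpand : (x - p) ⬝ᵥ F *ᵥ (x - p) = (x - q) ⬝ᵥ F *ᵥ (x - q) + (q - p) ⬝ᵥ F *ᵥ (q - p)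
      + 2 * ((x - q) ⬝ᵥ F *ᵥ (q - p)) := by
    rw [show x - p = (x - q) + (q - p) by abel, add_dotProduct, mulVec_add, dotProduct_add,
      dotProduct_add, hF.isHermitian.dotProduct_mulVec_comm (q - p) (x - q)]
    ring
  have hmin_q := hmin q hq
  have hvar_x := hvar x hx
  exact sub_eq_zero.mp (hF.eq_zero_of_dotProduct_mulVec_self_nonpos (by linarith))

theorem eq_sub_smul_inv_mulVec_of_isMin_halfspace [DecidableEq ι] (hF : F.PosDef)
    (a : ι → ℝ) (b : ℝ) (θ₀ p x : ι → ℝ) (hx : a ⬝ᵥ (x - θ₀) + b ≤ 0)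
    (hmin : ∀ y, a ⬝ᵥ (y - θ₀) + b ≤ 0 → (x - p) ⬝ᵥ F *ᵥ (x - p) ≤ (y - p) ⬝ᵥ F *ᵥ (y - p)) :
    x = p - max 0 ((a ⬝ᵥ (p - θ₀) + b) / (a ⬝ᵥ F⁻¹ *ᵥ a)) • F⁻¹ *ᵥ a := by
  set s := a ⬝ᵥ F⁻¹ *ᵥ a
  set r := a ⬝ᵥ (p - θ₀) + b
  set t := max 0 (r / s)
  set q := p - t • F⁻¹ *ᵥ a with hq_def
  have hconstr_q : a ⬝ᵥ (q - θ₀) + b = r - t * s := by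
    rw [hq_def, sub_right_comm, dotProduct_sub, dotProduct_smul, smul_eq_mul]
    ring
  have hq : a ⬝ᵥ (q - θ₀) + b ≤ 0 := by
    by_cases ha : a = 0
    · subst ha
      simpa using hx
    · rw [hconstr_q]
      exact sub_max_zero_div_mul_nonpos r (by simpa using hF.inv.dotProduct_mulVec_pos ha)
  have hFqp : F *ᵥ (q - p) = -t • a := by
    rw [hq_def, sub_sub_cancel_left, mulVec_neg, mulVec_smul, mulVec_mulVec,
      mul_nonsing_inv F ((isUnit_iff_isUnit_det F).mp hF.isUnit), one_mulVec, neg_smul]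
  refine hF.eq_of_isMin_of_variational (S := {y | a ⬝ᵥ (y - θ₀) + b ≤ 0}) hq
    (fun y (hy : a ⬝ᵥ (y - θ₀) + b ≤ 0) => ?_) hx hmin
  have hslack := max_zero_div_mul_sub_mul_eq_zero r s
  have hy' : a ⬝ᵥ (y - q) = a ⬝ᵥ (y - θ₀) + b - (r - t * s) := by
    rw [← hconstr_q, show y - q = (y - θ₀) - (q - θ₀) by abel, dotProduct_sub]
    ring
  rw [hFqp, dotProduct_smul, smul_eq_mul, dotProduct_comm, hy']
  linarith [mul_nonneg (le_max_left 0 (r / s)) (neg_nonneg.mpr hy)]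

end Matrix.PosDef

theorem stmt_11_general {n : ℕ} (F : Matrix (Fin n) (Fin n) ℝ) (hF : F.PosDef)
    (g a c : Fin n → ℝ) (b d : ℝ)
    (θk θtwothirds θ' : Fin n → ℝ)
    (u : ℝ) :
    let θonethird := θk + u • F⁻¹.mulVec g
    (a ⬝ᵥ (θtwothirds - θk) + b ≤ 0) →
    (∀ θ : Fin n → ℝ, a ⬝ᵥ (θ - θk) + b ≤ 0 →
      (θtwothirds - θonethird) ⬝ᵥ F.mulVec (θtwothirds - θonethird)
        ≤ (θ - θonethird) ⬝ᵥ F.mulVec (θ - θonethird)) →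
    (c ⬝ᵥ (θ' - θk) + d ≤ 0) →
    (∀ θ : Fin n → ℝ, c ⬝ᵥ (θ - θk) + d ≤ 0 →
      (θ' - θonethird) ⬝ᵥ F.mulVec (θ' - θonethird)
        ≤ (θ - θonethird) ⬝ᵥ F.mulVec (θ - θonethird)) →
    θk + u • F⁻¹.mulVec g
      - max 0 ((u * (a ⬝ᵥ F⁻¹.mulVec g) + b) / (a ⬝ᵥ F⁻¹.mulVec a)) • F⁻¹.mulVec a
      - max 0 ((u * (c ⬝ᵥ F⁻¹.mulVec g) + d) / (c ⬝ᵥ F⁻¹.mulVec c)) • F⁻¹.mulVec c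
      = θtwothirds + (θ' - θonethird) := by
  intro θonethird hfeas_a hmin_a hfeas_c hmin_c
  have hstep (v : Fin n → ℝ) : v ⬝ᵥ (θonethird - θk) = u * (v ⬝ᵥ F⁻¹ *ᵥ g) := by
    rw [add_sub_cancel_left, dotProduct_smul, smul_eq_mul]
  rw [hF.eq_sub_smul_inv_mulVec_of_isMin_halfspace a b θk θonethird θtwothirds hfeas_a hmin_a,
    hF.eq_sub_smul_inv_mulVec_of_isMin_halfspace c d θk θonethird θ' hfeas_c hmin_c,
    hstep a, hstep c]
  simp only [θonethird]
  abel

theorem stmt_11 {n : ℕ} (F : Matrix (Fin n) (Fin n) ℝ) (hF : F.PosDef)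
    (g a c : Fin n → ℝ) (hg : g ≠ 0) (b d δ : ℝ) (hδ : 0 < δ)
    (θk θtwothirds θ' : Fin n → ℝ)
    (u : ℝ) (hu : u = Real.sqrt (2 * δ / (g ⬝ᵥ F⁻¹.mulVec g))) :
    let θonethird := θk + u • F⁻¹.mulVec g
    (a ⬝ᵥ (θtwothirds - θk) + b ≤ 0) →
    (∀ θ : Fin n → ℝ, a ⬝ᵥ (θ - θk) + b ≤ 0 →
      (θtwothirds - θonethird) ⬝ᵥ F.mulVec (θtwothirds - θonethird)
        ≤ (θ - θonethird) ⬝ᵥ F.mulVec (θ - θonethird)) →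
    (c ⬝ᵥ (θ' - θk) + d ≤ 0) →
    (∀ θ : Fin n → ℝ, c ⬝ᵥ (θ - θk) + d ≤ 0 →
      (θ' - θonethird) ⬝ᵥ F.mulVec (θ' - θonethird)
        ≤ (θ - θonethird) ⬝ᵥ F.mulVec (θ - θonethird)) →
    θk + u • F⁻¹.mulVec g
      - max 0 ((u * (a ⬝ᵥ F⁻¹.mulVec g) + b) / (a ⬝ᵥ F⁻¹.mulVec a)) • F⁻¹.mulVec a
      - max 0 ((u * (c ⬝ᵥ F⁻¹.mulVec g) + d) / (c ⬝ᵥ F⁻¹.mulVec c)) • F⁻¹.mulVec c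
      = θtwothirds + (θ' - θonethird) :=
  stmt_11_general F hF g a c b d θk θtwothirds θ' u
end

section
/- Let F be a positive definite symmetric n×n matrix with largest singular value σ₁(F⁻¹) of its inverse, η > 0, G, H ≥ 0, and f : ℝⁿ → ℝ differentiable with ‖∇f(θᵏ)‖ ≤ G. Suppose C is a closed convex set of Euclidean diameter at most H, θᵏ ∈ C, and θ⁺ is the Euclidean projection of θᵏ − η F⁻¹∇f(θᵏ) onto C. Then for all θ ∈ C: ∇f(θᵏ)ᵀ F⁻¹ (θ − θᵏ) ≥ −(G σ₁(F⁻¹) + H/η) ‖θ⁺ − θᵏ‖. -/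
open scoped RealInnerProductSpace

theorem stmt_15 {n : ℕ} (F : Matrix (Fin n) (Fin n) ℝ) (hF : F.PosDef)
    (η G H : ℝ) (hη : 0 < η) (hG : 0 ≤ G) (hH : 0 ≤ H)
    (f : EuclideanSpace ℝ (Fin n) → ℝ) (gf : EuclideanSpace ℝ (Fin n))
    (θk : EuclideanSpace ℝ (Fin n)) (hgrad : HasGradientAt f gf θk) (hgf : ‖gf‖ ≤ G)
    (C : Set (EuclideanSpace ℝ (Fin n))) (hcl : IsClosed C) (hconv : Convex ℝ C)
    (hdiam : ∀ x ∈ C, ∀ y ∈ C, ‖x - y‖ ≤ H) (hθk : θk ∈ C)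
    (θplus : EuclideanSpace ℝ (Fin n)) (hmem : θplus ∈ C)
    (hmin : ∀ θ' ∈ C,
      ‖(θk - η • (Matrix.toEuclideanLin F⁻¹ gf)) - θplus‖
        ≤ ‖(θk - η • (Matrix.toEuclideanLin F⁻¹ gf)) - θ'‖) :
    ∀ θ ∈ C, ⟪gf, Matrix.toEuclideanLin F⁻¹ (θ - θk)⟫
      ≥ -(G * ‖Matrix.toEuclideanCLM (𝕜 := ℝ) F⁻¹‖ + H / η) * ‖θplus - θk‖ := by
  intro θ hθ
  set A : EuclideanSpace ℝ (Fin n) →ₗ[ℝ] EuclideanSpace ℝ (Fin n) :=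
    Matrix.toEuclideanLin F⁻¹ with hA
  set d : EuclideanSpace ℝ (Fin n) := A gf with hd
  set u : EuclideanSpace ℝ (Fin n) := θk - η • d with hu
  -- symmetry of A
  have hsymm : (Matrix.toEuclideanLin (F⁻¹)).IsSymmetric :=
    Matrix.isHermitian_iff_isSymmetric.mp hF.isHermitian.inv
  -- variational inequality
  haveI : Nonempty C := ⟨⟨θplus, hmem⟩⟩
  have hVI : ∀ w ∈ C, ⟪u - θplus, w - θplus⟫ ≤ 0 := by
    rw [← norm_eq_iInf_iff_real_inner_le_zero hconv hmem]
    refine le_antisymm (le_ciInf fun w => hmin w w.2) ?_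
    exact ciInf_le ⟨0, fun _ ⟨_, h⟩ => h ▸ norm_nonneg _⟩ (⟨θplus, hmem⟩ : C)
  -- ‖d‖ bound
  have hdnorm : ‖d‖ ≤ ‖Matrix.toEuclideanCLM (𝕜 := ℝ) F⁻¹‖ * G := by
    have h1 : d = Matrix.toEuclideanCLM (𝕜 := ℝ) F⁻¹ gf := by
      rw [hd, hA, ← Matrix.coe_toEuclideanCLM_eq_toEuclideanLin]; rfl
    rw [h1]
    calc ‖Matrix.toEuclideanCLM (𝕜 := ℝ) F⁻¹ gf‖
        ≤ ‖Matrix.toEuclideanCLM (𝕜 := ℝ) F⁻¹‖ * ‖gf‖ :=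
          (Matrix.toEuclideanCLM (𝕜 := ℝ) F⁻¹).le_opNorm gf
      _ ≤ ‖Matrix.toEuclideanCLM (𝕜 := ℝ) F⁻¹‖ * G :=
          mul_le_mul_of_nonneg_left hgf (norm_nonneg _)
  -- part 1: ⟪d, θ - θplus⟫ ≥ -(H/η) * ‖θplus - θk‖
  have h1 : ⟪d, θ - θplus⟫ ≥ -(H / η) * ‖θplus - θk‖ := by
    have hvi := hVI θ hθ
    have hexp : ⟪u - θplus, θ - θplus⟫
        = ⟪θk - θplus, θ - θplus⟫ - η * ⟪d, θ - θplus⟫ := by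
      rw [hu, sub_right_comm, inner_sub_left, real_inner_smul_left]
    have hskθ : ⟪θk - θplus, θ - θplus⟫ ≥ -(‖θplus - θk‖ * H) := by
      calc ⟪θk - θplus, θ - θplus⟫ ≥ -(‖θk - θplus‖ * ‖θ - θplus‖) :=
            neg_le_of_neg_le (by
              have := abs_real_inner_le_norm (θk - θplus) (θ - θplus)
              linarith [neg_abs_le ⟪θk - θplus, θ - θplus⟫])
        _ ≥ -(‖θplus - θk‖ * H) := by
            rw [norm_sub_rev θk θplus]
            exact neg_le_neg
              (mul_le_mul_of_nonneg_left (hdiam θ hθ θplus hmem) (norm_nonneg _))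
    have hηd : η * ⟪d, θ - θplus⟫ ≥ -(‖θplus - θk‖ * H) := by
      rw [hexp] at hvi; linarith
    rw [ge_iff_le, neg_mul, neg_le]
    rw [div_mul_eq_mul_div, le_div_iff₀ hη]
    nlinarith [hηd]
  -- part 2: ⟪d, θplus - θk⟫ ≥ -(G * ‖F⁻¹‖) * ‖θplus - θk‖
  have h2 : ⟪d, θplus - θk⟫ ≥ -(G * ‖Matrix.toEuclideanCLM (𝕜 := ℝ) F⁻¹‖) * ‖θplus - θk‖ := by
    have := abs_real_inner_le_norm d (θplus - θk)
    have hb : ‖d‖ * ‖θplus - θk‖ ≤ G * ‖Matrix.toEuclideanCLM (𝕜 := ℝ) F⁻¹‖ * ‖θplus - θk‖ := by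
      rw [mul_comm G]
      exact mul_le_mul_of_nonneg_right hdnorm (norm_nonneg _)
    nlinarith [neg_abs_le ⟪d, θplus - θk⟫]
  -- combine
  have hAd : ⟪gf, Matrix.toEuclideanLin F⁻¹ (θ - θk)⟫ = ⟪d, θ - θk⟫ := by
    rw [hd, hA]; exact (hsymm gf (θ - θk)).symm
  have hsplit : ⟪d, θ - θk⟫ = ⟪d, θ - θplus⟫ + ⟪d, θplus - θk⟫ := by
    rw [← inner_add_right]; congr 1; abel
  rw [hAd, hsplit]
  have : -(G * ‖Matrix.toEuclideanCLM (𝕜 := ℝ) F⁻¹‖ + H / η) * ‖θplus - θk‖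
      = -(H / η) * ‖θplus - θk‖ + -(G * ‖Matrix.toEuclideanCLM (𝕜 := ℝ) F⁻¹‖) * ‖θplus - θk‖ := by
    ring
  rw [this]
  exact add_le_add h1 h2
end
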